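/- arXiv:2512.22638 — 2 statements merged into one kernel-verified Lean document; each statement's English description precedes it below -/
import Mathlib

section
/- Let Θ be a measurable space and π₀, π₁ two measures on Θ (priors for two hypotheses). Let L, L̃ : Θ → ℝ be measurable with |L(θ) − L̃(θ)| ≤ η for all θ ∈ Θ, η ≥ 0. Assume exp∘L and exp∘L̃ are integrable with respect to both π₀ and π₁, and that all four marginal likelihoods ∫ exp(L) dπᵢ and ∫ exp(L̃) dπᵢ (i = 0, 1) are strictly positive. Then the log-Bayes factors satisfy |log(∫ exp(L̃) dπ₁ / ∫ exp(L̃) dπ₀) − log(∫ exp(L) dπ₁ / ∫ exp(L) dπ₀)| ≤ 2·η. In particular, if η = n·ε where n is the sample size and ε the pointwise approximation error, the log-Bayes-factor error is at most 2·n·ε. -/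
open MeasureTheory

/-! A pointwise bound `|L − L̃| ≤ η` gives `e^{-η} ∫ e^L dπ ≤ ∫ e^{L̃} dπ ≤ e^η ∫ e^L dπ` for every
prior `π`, so each log-marginal likelihood moves by at most `η`; the log-Bayes factor is a
difference of two of them, hence moves by at most `2η`. -/

section LogIntegralExp

variable {Θ : Type*} [MeasurableSpace Θ] {μ : Measure Θ} {f g : Θ → ℝ} {η : ℝ}

lemma integral_exp_le_exp_mul_integral_exp (hf : Integrable (fun θ => Real.exp (f θ)) μ)
    (h : ∀ θ, g θ ≤ f θ + η) :
    ∫ θ, Real.exp (g θ) ∂μ ≤ Real.exp η * ∫ θ, Real.exp (f θ) ∂μ := by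
  rw [← integral_const_mul]
  refine integral_mono_of_nonneg (.of_forall fun θ => (Real.exp_pos _).le) (hf.const_mul _)
    (.of_forall fun θ => ?_)
  exact (Real.exp_le_exp.2 (by linarith [h θ])).trans_eq (Real.exp_add η (f θ))

lemma log_integral_exp_le (hf : Integrable (fun θ => Real.exp (f θ)) μ)
    (hf₀ : 0 < ∫ θ, Real.exp (f θ) ∂μ) (hg₀ : 0 < ∫ θ, Real.exp (g θ) ∂μ)
    (h : ∀ θ, g θ ≤ f θ + η) :
    Real.log (∫ θ, Real.exp (g θ) ∂μ) ≤ Real.log (∫ θ, Real.exp (f θ) ∂μ) + η := by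
  calc Real.log (∫ θ, Real.exp (g θ) ∂μ)
      ≤ Real.log (Real.exp η * ∫ θ, Real.exp (f θ) ∂μ) :=
        Real.log_le_log hg₀ (integral_exp_le_exp_mul_integral_exp hf h)
    _ = Real.log (∫ θ, Real.exp (f θ) ∂μ) + η := by
        rw [Real.log_mul (Real.exp_ne_zero _) hf₀.ne', Real.log_exp, add_comm]

lemma abs_log_integral_exp_sub_le (hf : Integrable (fun θ => Real.exp (f θ)) μ)
    (hg : Integrable (fun θ => Real.exp (g θ)) μ)
    (hf₀ : 0 < ∫ θ, Real.exp (f θ) ∂μ) (hg₀ : 0 < ∫ θ, Real.exp (g θ) ∂μ)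
    (h : ∀ θ, |f θ - g θ| ≤ η) :
    |Real.log (∫ θ, Real.exp (g θ) ∂μ) - Real.log (∫ θ, Real.exp (f θ) ∂μ)| ≤ η := by
  rw [abs_sub_le_iff]
  constructor
  · linarith [log_integral_exp_le (η := η) hf hf₀ hg₀ fun θ => by linarith [(abs_le.1 (h θ)).1]]
  · linarith [log_integral_exp_le (η := η) hg hg₀ hf₀ fun θ => by linarith [(abs_le.1 (h θ)).2]]

end LogIntegralExp

theorem bayes_factor_preservation_general {Θ : Type*} [MeasurableSpace Θ]
    (π₀ π₁ : Measure Θ)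
    (L Lt : Θ → ℝ)
    (η : ℝ)
    (happrox : ∀ θ : Θ, |L θ - Lt θ| ≤ η)
    (hint0 : Integrable (fun θ => Real.exp (L θ)) π₀)
    (hint1 : Integrable (fun θ => Real.exp (L θ)) π₁)
    (hint0' : Integrable (fun θ => Real.exp (Lt θ)) π₀)
    (hint1' : Integrable (fun θ => Real.exp (Lt θ)) π₁)
    (hpos0 : 0 < ∫ θ, Real.exp (L θ) ∂π₀)
    (hpos1 : 0 < ∫ θ, Real.exp (L θ) ∂π₁)
    (hpos0' : 0 < ∫ θ, Real.exp (Lt θ) ∂π₀)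
    (hpos1' : 0 < ∫ θ, Real.exp (Lt θ) ∂π₁) :
    |Real.log ((∫ θ, Real.exp (Lt θ) ∂π₁) / (∫ θ, Real.exp (Lt θ) ∂π₀)) -
      Real.log ((∫ θ, Real.exp (L θ) ∂π₁) / (∫ θ, Real.exp (L θ) ∂π₀))| ≤
      2 * η := by
  have h₁ := abs_log_integral_exp_sub_le hint1 hint1' hpos1 hpos1' happrox
  have h₀ := abs_log_integral_exp_sub_le hint0 hint0' hpos0 hpos0' happrox
  rw [Real.log_div hpos1'.ne' hpos0'.ne', Real.log_div hpos1.ne' hpos0.ne']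
  calc _ = |(Real.log (∫ θ, Real.exp (Lt θ) ∂π₁) - Real.log (∫ θ, Real.exp (L θ) ∂π₁)) -
          (Real.log (∫ θ, Real.exp (Lt θ) ∂π₀) - Real.log (∫ θ, Real.exp (L θ) ∂π₀))| := by
        ring_nf
    _ ≤ η + η := (abs_sub _ _).trans (add_le_add h₁ h₀)
    _ = 2 * η := (two_mul η).symm

/-- **Bayes factor preservation.** If `|L − L̃| ≤ η` pointwise and all four
marginal likelihoods (under priors `π₀`, `π₁`) are integrable and strictly
positive, then the log-Bayes factors differ by at most `2·η`. -/
theorem bayes_factor_preservation {Θ : Type*} [MeasurableSpace Θ]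
    (π₀ π₁ : Measure Θ)
    (L Lt : Θ → ℝ) (hL : Measurable L) (hLt : Measurable Lt)
    (η : ℝ) (hη : 0 ≤ η)
    (happrox : ∀ θ : Θ, |L θ - Lt θ| ≤ η)
    (hint0 : Integrable (fun θ => Real.exp (L θ)) π₀)
    (hint1 : Integrable (fun θ => Real.exp (L θ)) π₁)
    (hint0' : Integrable (fun θ => Real.exp (Lt θ)) π₀)
    (hint1' : Integrable (fun θ => Real.exp (Lt θ)) π₁)
    (hpos0 : 0 < ∫ θ, Real.exp (L θ) ∂π₀)
    (hpos1 : 0 < ∫ θ, Real.exp (L θ) ∂π₁)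
    (hpos0' : 0 < ∫ θ, Real.exp (Lt θ) ∂π₀)
    (hpos1' : 0 < ∫ θ, Real.exp (Lt θ) ∂π₁) :
    |Real.log ((∫ θ, Real.exp (Lt θ) ∂π₁) / (∫ θ, Real.exp (Lt θ) ∂π₀)) -
      Real.log ((∫ θ, Real.exp (L θ) ∂π₁) / (∫ θ, Real.exp (L θ) ∂π₀))| ≤
      2 * η :=
  bayes_factor_preservation_general π₀ π₁ L Lt η happrox hint0 hint1 hint0' hint1' hpos0 hpos1
    hpos0' hpos1'
end

section
/- Let (X, 𝒜, μ) be a probability space, A, B ∈ 𝒜 disjoint with μ(A) > 0 and μ(B) > 0, and T : X → Z a map for which there exist x ∈ A and x' ∈ B with T(x) = T(x'). Then for every M > 0 there exist measurable functions p₁, p₂ : X → ℝ that are strictly positive, bounded, and satisfy ∫ p₁ dμ = ∫ p₂ dμ = 1 (namely p₁ = (1 + M·𝟙_A)/(1 + M·μ(A)) and p₂ = (1 + M·𝟙_B)/(1 + M·μ(B))), such that for every decoder λ̃ : Z → ℝ, sup_{y ∈ X} |log(p₁(y)/p₂(y)) − λ̃(T(y))| ≥ log(1 + M). Hence no non-injective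 embedding can achieve zero likelihood-ratio distortion uniformly over all dominated models. -/
/-!
The density `p_S ∝ 1 + M·𝟙_S` takes exactly two values, `(1 + M)/Z_S` on `S` and `1/Z_S` off
`S`. For disjoint `A`, `B` and `x ∈ A`, `x' ∈ B`, the log-likelihood ratio `log (p_A / p_B)`
therefore drops by exactly `2 log (1 + M)` from `x` to `x'`, the normalising constants cancelling.
A decoder sees `T x = T x'` and must output one value for both points, so by the triangle
inequality it misses one of them by at least `log (1 + M)`.
-/

open MeasureTheory

theorem exists_le_abs_sub_comp_of_eq {X Z : Type*} {f : X → ℝ} {T : X → Z} {x x' : X}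
    {δ : ℝ} (hgap : 2 * δ ≤ f x - f x') (hcol : T x = T x') (g : Z → ℝ) :
    ∃ y, δ ≤ |f y - g (T y)| := by
  by_contra! h
  have hx := abs_lt.mp (h x)
  have hx' := abs_lt.mp (h x')
  rw [hcol] at hx
  linarith [hx.2, hx'.1]

section BumpDensity

variable {X : Type*} [MeasurableSpace X] (μ : Measure X) {M : ℝ} {S : Set X}

noncomputable def bumpDensity (M : ℝ) (S : Set X) : X → ℝ :=
  fun y => (1 + M * S.indicator 1 y) / (1 + M * (μ S).toReal)

theorem measurable_bumpDensity (M : ℝ) (hS : MeasurableSet S) :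
    Measurable (bumpDensity μ M S) :=
  (measurable_const.add ((measurable_const.indicator hS).const_mul M)).div_const _

variable {μ}

theorem bumpDensity_of_mem (M : ℝ) {y : X} (hy : y ∈ S) :
    bumpDensity μ M S y = (1 + M) / (1 + M * (μ S).toReal) := by
  simp [bumpDensity, Set.indicator_of_mem hy]

theorem bumpDensity_of_notMem (M : ℝ) {y : X} (hy : y ∉ S) :
    bumpDensity μ M S y = 1 / (1 + M * (μ S).toReal) := by
  simp [bumpDensity, Set.indicator_of_notMem hy]

theorem bumpDensity_pos (hM : 0 ≤ M) (y : X) : 0 < bumpDensity μ M S y := by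
  have hind : 0 ≤ S.indicator (1 : X → ℝ) y := Set.indicator_nonneg (fun _ _ => zero_le_one) y
  unfold bumpDensity
  positivity

theorem bumpDensity_le (hM : 0 ≤ M) (y : X) :
    bumpDensity μ M S y ≤ (1 + M) / (1 + M * (μ S).toReal) := by
  have hind : S.indicator (1 : X → ℝ) y ≤ 1 :=
    Set.indicator_le_self' (fun _ _ => zero_le_one) y
  unfold bumpDensity
  gcongr
  nlinarith

theorem integral_bumpDensity [IsProbabilityMeasure μ] (hM : 0 ≤ M) (hS : MeasurableSet S) :
    ∫ y, bumpDensity μ M S y ∂μ = 1 := by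
  have hZ : 1 + M * (μ S).toReal ≠ 0 := by positivity
  have hind : Integrable (S.indicator (1 : X → ℝ)) μ := (integrable_const 1).indicator hS
  simp only [bumpDensity, div_eq_mul_inv]
  rw [integral_mul_const, integral_add (integrable_const 1) (hind.const_mul M),
    integral_const_mul, integral_indicator_one hS]
  simp [Measure.real_def, hZ]

theorem bumpDensity_div_bumpDensity (hM : 0 ≤ M) {x x' : X} (hx : x ∈ S) (hx' : x' ∉ S) :
    bumpDensity μ M S x / bumpDensity μ M S x' = 1 + M := by
  have hZ : 1 + M * (μ S).toReal ≠ 0 := by positivity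
  rw [bumpDensity_of_mem M hx, bumpDensity_of_notMem M hx']
  field_simp

theorem log_bumpDensity_ratio_sub {A B : Set X} (hM : 0 ≤ M) (hdisj : Disjoint A B) {x x' : X}
    (hx : x ∈ A) (hx' : x' ∈ B) :
    Real.log (bumpDensity μ M A x / bumpDensity μ M B x)
      - Real.log (bumpDensity μ M A x' / bumpDensity μ M B x') = 2 * Real.log (1 + M) := by
  have hpos := fun (S : Set X) (y : X) => (bumpDensity_pos (μ := μ) (S := S) hM y).ne'
  calc Real.log (bumpDensity μ M A x / bumpDensity μ M B x)
        - Real.log (bumpDensity μ M A x' / bumpDensity μ M B x')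
      = Real.log (bumpDensity μ M A x / bumpDensity μ M A x')
        + Real.log (bumpDensity μ M B x' / bumpDensity μ M B x) := by
        rw [Real.log_div (hpos A x) (hpos B x), Real.log_div (hpos A x') (hpos B x'),
          Real.log_div (hpos A x) (hpos A x'), Real.log_div (hpos B x') (hpos B x)]
        ring
    _ = 2 * Real.log (1 + M) := by
        rw [bumpDensity_div_bumpDensity hM hx (hdisj.notMem_of_mem_right hx'),
          bumpDensity_div_bumpDensity hM hx' (hdisj.notMem_of_mem_left hx)]
        ring

end BumpDensity

theorem no_free_lunch_general {X Z : Type*} [MeasurableSpace X]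
    (μ : Measure X) [IsProbabilityMeasure μ]
    (A B : Set X) (hA : MeasurableSet A) (hB : MeasurableSet B)
    (hdisj : Disjoint A B)
    (T : X → Z) (x x' : X) (hx : x ∈ A) (hx' : x' ∈ B) (hcol : T x = T x') :
    ∀ M : ℝ, 0 < M →
      ∃ p₁ p₂ : X → ℝ,
        Measurable p₁ ∧ Measurable p₂ ∧
        (∀ y, 0 < p₁ y) ∧ (∀ y, 0 < p₂ y) ∧
        (∃ C : ℝ, ∀ y, p₁ y ≤ C) ∧ (∃ C : ℝ, ∀ y, p₂ y ≤ C) ∧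
        (∫ y, p₁ y ∂μ) = 1 ∧ (∫ y, p₂ y ∂μ) = 1 ∧
        (p₁ = fun y => (1 + M * A.indicator 1 y) / (1 + M * (μ A).toReal)) ∧
        (p₂ = fun y => (1 + M * B.indicator 1 y) / (1 + M * (μ B).toReal)) ∧
        ∀ lamTil : Z → ℝ, ∃ y : X,
          Real.log (1 + M) ≤ |Real.log (p₁ y / p₂ y) - lamTil (T y)| := by
  intro M hM
  refine ⟨bumpDensity μ M A, bumpDensity μ M B,
    measurable_bumpDensity μ M hA, measurable_bumpDensity μ M hB,
    bumpDensity_pos hM.le, bumpDensity_pos hM.le,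
    ⟨_, bumpDensity_le hM.le⟩, ⟨_, bumpDensity_le hM.le⟩,
    integral_bumpDensity hM.le hA, integral_bumpDensity hM.le hB, rfl, rfl, fun lamTil => ?_⟩
  exact exists_le_abs_sub_comp_of_eq
    (f := fun y => Real.log (bumpDensity μ M A y / bumpDensity μ M B y))
    (log_bumpDensity_ratio_sub hM.le hdisj hx hx').ge hcol lamTil

/-- **No free lunch.** If an embedding `T` collides on two disjoint sets of
positive measure, then for every `M > 0` there exist two bounded, strictly
positive probability densities (bump perturbations of the uniform density on
`A` and `B` respectively) whose log-likelihood ratio cannot be reproduced from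
the embedding by any decoder to accuracy better than `log(1 + M)`. -/
theorem no_free_lunch {X Z : Type*} [MeasurableSpace X]
    (μ : Measure X) [IsProbabilityMeasure μ]
    (A B : Set X) (hA : MeasurableSet A) (hB : MeasurableSet B)
    (hdisj : Disjoint A B) (hApos : 0 < μ A) (hBpos : 0 < μ B)
    (T : X → Z) (x x' : X) (hx : x ∈ A) (hx' : x' ∈ B) (hcol : T x = T x') :
    ∀ M : ℝ, 0 < M →
      ∃ p₁ p₂ : X → ℝ,
        Measurable p₁ ∧ Measurable p₂ ∧
        (∀ y, 0 < p₁ y) ∧ (∀ y, 0 < p₂ y) ∧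
        (∃ C : ℝ, ∀ y, p₁ y ≤ C) ∧ (∃ C : ℝ, ∀ y, p₂ y ≤ C) ∧
        (∫ y, p₁ y ∂μ) = 1 ∧ (∫ y, p₂ y ∂μ) = 1 ∧
        (p₁ = fun y => (1 + M * A.indicator 1 y) / (1 + M * (μ A).toReal)) ∧
        (p₂ = fun y => (1 + M * B.indicator 1 y) / (1 + M * (μ B).toReal)) ∧
        ∀ lamTil : Z → ℝ, ∃ y : X,
          Real.log (1 + M) ≤ |Real.log (p₁ y / p₂ y) - lamTil (T y)| :=
  no_free_lunch_general μ A B hA hB hdisj T x x' hx hx' hcol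
end
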